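/- arXiv:1009.0895 — 3 statements merged into one kernel-verified Lean document; each statement's English description precedes it below -/
import Mathlib

section
/- Let n ≥ 1, let 1 ≤ p, q ≤ ∞ with p < q, and s ∈ ℝ. Suppose there exists C > 0 such that ‖{c_k}‖_{ℓ^p(ℤ^n)} ≤ C‖{(1+|k|)^s c_k}‖_{ℓ^q(ℤ^n)} for all finitely supported complex sequences {c_k}_{k∈ℤ^n}. Then s > n(1/p − 1/q). -/
noncomputable section

open MeasureTheory Real ENNReal

abbrev En (n : ℕ) : Type := EuclideanSpace ℝ (Fin n)
abbrev Zn (n : ℕ) : Type := Fin n → ℤ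

def zc {n : ℕ} (k : Zn n) : En n := WithLp.toLp 2 (fun i => (k i : ℝ))

/-- Fourier transform `f̂(ξ) = ∫ f(x) e^{-i x·ξ} dx`. -/
def FT {n : ℕ} (f : En n → ℂ) (ξ : En n) : ℂ :=
  ∫ x : En n, f x * Complex.exp (-(Complex.I * ((inner ℝ x ξ : ℝ) : ℂ)))

/-- Inverse Fourier transform `g^∨(x) = (2π)^{-n} ∫ g(ξ) e^{i x·ξ} dξ`. -/
def IFT {n : ℕ} (g : En n → ℂ) (x : En n) : ℂ :=
  (((2 * Real.pi) ^ n)⁻¹ : ℝ) • ∫ ξ : En n, g ξ * Complex.exp (Complex.I * ((inner ℝ x ξ : ℝ) : ℂ))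

/-- `ℓ^q` norm (with sup modification when `q = ∞`). -/
def lqNorm {ι : Type*} (q : ℝ≥0∞) (a : ι → ℝ≥0∞) : ℝ≥0∞ :=
  if q = ∞ then ⨆ i, a i else (∑' i, a i ^ q.toReal) ^ (1 / q.toReal)

/-- The weight `⟨k⟩^s = (1+|k|²)^{s/2}`. -/
def jweight {n : ℕ} (s : ℝ) (k : Zn n) : ℝ≥0∞ :=
  ENNReal.ofReal ((1 + ‖zc k‖ ^ 2) ^ (s / 2))

/-- `φ(D-k)f = (φ(·-k) f̂)^∨`. -/
def modPiece {n : ℕ} (φ : En n → ℂ) (f : En n → ℂ) (k : Zn n) : En n → ℂ :=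
  IFT fun ξ => φ (ξ - zc k) * FT f ξ

/-- Modulation space norm `‖f‖_{M^{p,q}_s}`. -/
def modNorm {n : ℕ} (φ : En n → ℂ) (p q : ℝ≥0∞) (s : ℝ) (f : En n → ℂ) : ℝ≥0∞ :=
  lqNorm q fun k : Zn n => jweight s k * eLpNorm (modPiece φ f k) p volume

/-- `L^p`-Sobolev norm `‖f‖_{L^p_s} = ‖(⟨·⟩^s f̂)^∨‖_{L^p}`. -/
def sobNorm {n : ℕ} (p : ℝ≥0∞) (s : ℝ) (f : En n → ℂ) : ℝ≥0∞ :=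
  eLpNorm (IFT fun ξ => ((((1 + ‖ξ‖ ^ 2) ^ (s / 2) : ℝ)) : ℂ) * FT f ξ) p volume

/-- A window `φ ∈ S(ℝⁿ)` with `supp φ ⊆ [-1,1]ⁿ` and `∑_k φ(ξ-k) = 1`. -/
def AdmissibleWindow {n : ℕ} (φ : SchwartzMap (En n) ℂ) : Prop :=
  (Function.support ⇑φ ⊆ {ξ : En n | ∀ i, |ξ i| ≤ 1}) ∧
    ∀ ξ : En n, ∑' k : Zn n, φ (ξ - zc k) = 1

/-- The index `ν₁(p,q)`. -/
def nu1 (p q : ℝ≥0∞) : ℝ :=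
  let a := (1 / p).toReal
  let b := (1 / q).toReal
  if b ≤ min a (1 - a) then 0
  else if 1 - a ≤ min b (1 / 2) then a + b - 1
  else -a + b

/-- The index `ν₂(p,q)`. -/
def nu2 (p q : ℝ≥0∞) : ℝ :=
  let a := (1 / p).toReal
  let b := (1 / q).toReal
  if max a (1 - a) ≤ b then 0
  else if max b (1 / 2) ≤ 1 - a then a + b - 1
  else -a + b

/-- The unimodular Fourier multiplier `e^{i|D|^α}f = (2π)^{-n} ∫ e^{i|ξ|^α} f̂(ξ) e^{ix·ξ} dξ`. -/
def expD {n : ℕ} (α : ℝ) (f : En n → ℂ) : En n → ℂ :=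
  IFT fun ξ => Complex.exp (Complex.I * (((‖ξ‖ ^ α : ℝ)) : ℂ)) * FT f ξ

/-- `φ(D-k)(e^{i|D|^α}f) = (φ(·-k) e^{i|·|^α} f̂)^∨`. -/
def expDPiece {n : ℕ} (φ : En n → ℂ) (α : ℝ) (f : En n → ℂ) (k : Zn n) : En n → ℂ :=
  IFT fun ξ => φ (ξ - zc k) * Complex.exp (Complex.I * (((‖ξ‖ ^ α : ℝ)) : ℂ)) * FT f ξ

/-- Modulation space norm of `e^{i|D|^α}f` (via the distributional Fourier transform). -/
def modNormExp {n : ℕ} (φ : En n → ℂ) (α : ℝ) (p q : ℝ≥0∞) (s : ℝ) (f : En n → ℂ) : ℝ≥0∞ :=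
  lqNorm q fun k : Zn n => jweight s k * eLpNorm (expDPiece φ α f k) p volume

/-- A sequence indexed by `ℤⁿ` is finitely supported. -/
def FinSupp {n : ℕ} (c : Zn n → ℂ) : Prop := (Function.support c).Finite


/-!
Suppose the inequality holds with `s ≤ n (1/p - 1/q)`. Testing it on `c_k = (1+|k|)^{-(s+n/q)}`
restricted to a finite set `T` turns both sides into powers of `S_T = ∑_{k∈T} (1+|k|)^{-n}`: the
left side is at least `S_T^{1/p}` and the right side at most `C S_T^{1/q}`. Since `1/q < 1/p`,
this bounds `S_T` uniformly in `T`, contradicting the divergence of `∑_{k∈ℤⁿ} (1+|k|)^{-n}`; the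
latter holds because each dyadic block `[2^j, 2^{j+1})ⁿ` contributes at least `(2(1+√n))^{-n}`.
-/

section lqNorm

variable {ι : Type*}

lemma sum_rpow_rpow_le_lqNorm {r : ℝ≥0∞} (hr : r ≠ ∞) (g : ι → ℝ≥0∞) (T : Finset ι) :
    (∑ i ∈ T, g i ^ r.toReal) ^ (1 / r.toReal) ≤ lqNorm r g := by
  rw [lqNorm, if_neg hr]
  gcongr
  exact ENNReal.sum_le_tsum T

lemma lqNorm_indicator_rpow_le (r : ℝ≥0∞) (w : ι → ℝ≥0∞) (T : Finset ι) :
    lqNorm r ((T : Set ι).indicator fun i => w i ^ (1 / r).toReal) ≤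
      (∑ i ∈ T, w i) ^ (1 / r).toReal := by
  rcases eq_or_ne r ∞ with rfl | hr
  · simp only [lqNorm, if_true, div_top, toReal_zero, ENNReal.rpow_zero]
    exact iSup_le fun i => Set.indicator_le_self' (fun _ _ => zero_le_one) i
  rcases eq_or_ne r 0 with rfl | hr0
  · simp [lqNorm]
  have hr' : 0 < r.toReal := ENNReal.toReal_pos hr0 hr
  rw [lqNorm, if_neg hr, tsum_eq_sum (s := T), one_div, one_div, toReal_inv]
  · refine le_of_eq (congrArg (· ^ _) (Finset.sum_congr rfl fun i hi => ?_))
    rw [Set.indicator_of_mem (by exact_mod_cast hi), ← ENNReal.rpow_mul,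
      inv_mul_cancel₀ hr'.ne', ENNReal.rpow_one]
  · intro i hi
    rw [Set.indicator_of_notMem (by exact_mod_cast hi), ENNReal.zero_rpow_of_pos hr']

end lqNorm

def dyadicBlock (n j : ℕ) : Finset (Zn n) :=
  Fintype.piFinset fun _ => Finset.Ico ((2 : ℤ) ^ j) (2 ^ (j + 1))

lemma card_dyadicBlock (n j : ℕ) : (dyadicBlock n j).card = 2 ^ (j * n) := by
  have : ((2 : ℤ) ^ (j + 1) - 2 ^ j).toNat = 2 ^ j := by
    rw [pow_succ, mul_two, add_sub_cancel_right]; exact_mod_cast Int.toNat_natCast (2 ^ j)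
  simp [dyadicBlock, Fintype.card_piFinset, Int.card_Ico, this, pow_mul]

lemma pairwiseDisjoint_dyadicBlock {n : ℕ} (hn : 0 < n) :
    (Set.univ : Set ℕ).PairwiseDisjoint (dyadicBlock n) := by
  have two_pow_lt (i j : ℕ) (h : (2 : ℤ) ^ i < 2 ^ (j + 1)) : i ≤ j :=
    Nat.lt_succ_iff.mp ((pow_lt_pow_iff_right₀ (one_lt_two : (1 : ℤ) < 2)).mp h)
  intro i _ j _ hij
  refine Finset.disjoint_left.mpr fun k hki hkj => hij ?_
  have hi := Finset.mem_Ico.mp (Fintype.mem_piFinset.mp hki ⟨0, hn⟩)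
  have hj := Finset.mem_Ico.mp (Fintype.mem_piFinset.mp hkj ⟨0, hn⟩)
  exact le_antisymm (two_pow_lt i j (hi.1.trans_lt hj.2)) (two_pow_lt j i (hj.1.trans_lt hi.2))

lemma norm_zc_le {n : ℕ} {k : Zn n} {M : ℝ} (hM : 0 ≤ M) (hk : ∀ i, |(k i : ℝ)| ≤ M) :
    ‖zc k‖ ≤ √n * M := by
  rw [EuclideanSpace.norm_eq, ← Real.sqrt_sq hM, ← Real.sqrt_mul n.cast_nonneg]
  refine Real.sqrt_le_sqrt ?_
  calc ∑ i, ‖zc k i‖ ^ 2 ≤ ∑ _i : Fin n, M ^ 2 :=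
        Finset.sum_le_sum fun i _ => pow_le_pow_left₀ (norm_nonneg _) (hk i) 2
    _ = n * M ^ 2 := by simp

lemma rpow_neg_le_sum_dyadicBlock (n j : ℕ) :
    (2 * (1 + √n)) ^ (-(n : ℝ)) ≤ ∑ k ∈ dyadicBlock n j, (1 + ‖zc k‖) ^ (-(n : ℝ)) := by
  have h2j : (1 : ℝ) ≤ 2 ^ j := one_le_pow₀ one_le_two
  have hterm : ∀ k ∈ dyadicBlock n j,
      (2 * (1 + √n) * 2 ^ j) ^ (-(n : ℝ)) ≤ (1 + ‖zc k‖) ^ (-(n : ℝ)) := by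
    intro k hk
    have hcoord : ∀ i, |(k i : ℝ)| ≤ 2 ^ (j + 1) := by
      intro i
      obtain ⟨hlo, hhi⟩ := Finset.mem_Ico.mp (Fintype.mem_piFinset.mp hk i)
      have : (0 : ℤ) ≤ k i := (pow_nonneg zero_le_two j).trans hlo
      rw [abs_of_nonneg (by exact_mod_cast this)]
      exact_mod_cast hhi.le
    have hnorm := norm_zc_le (by positivity) hcoord
    refine Real.rpow_le_rpow_of_nonpos (by positivity) ?_ (by simp)
    rw [pow_succ] at hnorm
    linarith
  have hcard : ((dyadicBlock n j).card : ℝ) * (2 * (1 + √n) * 2 ^ j) ^ (-(n : ℝ)) =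
      (2 * (1 + √n)) ^ (-(n : ℝ)) := by
    rw [Real.mul_rpow (by positivity) (by positivity), Real.rpow_neg (x := 2 ^ j) (by positivity),
      Real.rpow_natCast, card_dyadicBlock, pow_mul]
    push_cast
    field_simp
  calc (2 * (1 + √n)) ^ (-(n : ℝ))
      = (dyadicBlock n j).card • (2 * (1 + √n) * 2 ^ j) ^ (-(n : ℝ)) := by
        rw [nsmul_eq_mul, hcard]
    _ ≤ _ := Finset.card_nsmul_le_sum _ _ _ hterm

lemma not_summable_one_add_norm_zc_rpow_neg {n : ℕ} (hn : 0 < n) :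
    ¬ Summable fun k : Zn n => (1 + ‖zc k‖) ^ (-(n : ℝ)) := by
  intro hsum
  set κ : ℝ := (2 * (1 + √n)) ^ (-(n : ℝ))
  have hκ : 0 < κ := by positivity
  have hlin : ∀ J : ℕ, J * κ ≤ ∑' k : Zn n, (1 + ‖zc k‖) ^ (-(n : ℝ)) := fun J =>
    calc J * κ = ∑ _j ∈ Finset.range J, κ := by simp
      _ ≤ ∑ j ∈ Finset.range J, ∑ k ∈ dyadicBlock n j, (1 + ‖zc k‖) ^ (-(n : ℝ)) :=
        Finset.sum_le_sum fun j _ => rpow_neg_le_sum_dyadicBlock n j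
      _ = ∑ k ∈ (Finset.range J).biUnion (dyadicBlock n), (1 + ‖zc k‖) ^ (-(n : ℝ)) :=
        (Finset.sum_biUnion ((pairwiseDisjoint_dyadicBlock hn).subset (Set.subset_univ _))).symm
      _ ≤ _ := hsum.sum_le_tsum _ fun k _ => by positivity
  obtain ⟨J, hJ⟩ := exists_nat_gt ((∑' k : Zn n, (1 + ‖zc k‖) ^ (-(n : ℝ))) / κ)
  exact (hlin J).not_gt ((div_lt_iff₀ hκ).mp hJ)

lemma le_rpow_inv_sub_of_rpow_le_mul_rpow {x C a b : ℝ} (hx : 0 < x) (hba : b < a)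
    (h : x ^ a ≤ C * x ^ b) : x ≤ C ^ (a - b)⁻¹ := by
  have hxC : x ^ (a - b) ≤ C := by
    rw [Real.rpow_sub hx]
    exact (div_le_iff₀ (Real.rpow_pos_of_pos hx b)).mpr h
  calc x = (x ^ (a - b)) ^ (a - b)⁻¹ := (Real.rpow_rpow_inv hx.le (sub_pos.mpr hba).ne').symm
    _ ≤ C ^ (a - b)⁻¹ :=
      Real.rpow_le_rpow (by positivity) hxC (inv_nonneg.mpr (sub_pos.mpr hba).le)

lemma sum_rpow_le_mul_sum_rpow_of_weighted_bound {n : ℕ} {p q : ℝ≥0∞} (hp0 : p ≠ 0)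
    (hp : p ≠ ∞) {s C : ℝ} (hC : 0 ≤ C) (hs : s + n * (1 / q).toReal ≤ n * (1 / p).toReal)
    (h : ∀ c : Zn n → ℂ, FinSupp c →
        lqNorm p (fun k : Zn n => (‖c k‖₊ : ℝ≥0∞)) ≤
          ENNReal.ofReal C *
            lqNorm q (fun k : Zn n =>
              ENNReal.ofReal ((1 + ‖zc k‖) ^ s) * (‖c k‖₊ : ℝ≥0∞)))
    (T : Finset (Zn n)) :
    (∑ k ∈ T, (1 + ‖zc k‖) ^ (-(n : ℝ))) ^ (1 / p).toReal ≤
      C * (∑ k ∈ T, (1 + ‖zc k‖) ^ (-(n : ℝ))) ^ (1 / q).toReal := by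
  set a := (1 / p).toReal
  set b := (1 / q).toReal
  set S := ∑ k ∈ T, (1 + ‖zc k‖) ^ (-(n : ℝ))
  have hρ (k : Zn n) : 1 ≤ 1 + ‖zc k‖ := le_add_of_nonneg_right (norm_nonneg _)
  have hρ0 (k : Zn n) : 0 < 1 + ‖zc k‖ := zero_lt_one.trans_le (hρ k)
  have hpt : 0 < p.toReal := ENNReal.toReal_pos hp0 hp
  have ha : a = 1 / p.toReal := by simp only [a, one_div, toReal_inv]
  have hS : ENNReal.ofReal S = ∑ k ∈ T, ENNReal.ofReal ((1 + ‖zc k‖) ^ (-(n : ℝ))) :=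
    ENNReal.ofReal_sum_of_nonneg fun k _ => by positivity
  set c : Zn n → ℂ := (T : Set (Zn n)).indicator fun k => ((1 + ‖zc k‖) ^ (-(s + n * b)) : ℝ)
  have hc : FinSupp c := T.finite_toSet.subset Set.support_indicator_subset
  have hcnorm (k : Zn n) : (‖c k‖₊ : ℝ≥0∞) =
      (T : Set (Zn n)).indicator (fun k => ENNReal.ofReal ((1 + ‖zc k‖) ^ (-(s + n * b)))) k := by
    by_cases hk : k ∈ (T : Set (Zn n))
    · rw [Set.indicator_of_mem hk, show c k = _ from Set.indicator_of_mem hk _,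
        Complex.nnnorm_real, ← enorm_eq_nnnorm, Real.enorm_eq_ofReal (by positivity)]
    · simp [c, hk]
  have hlow : ENNReal.ofReal (S ^ a) ≤ lqNorm p (fun k : Zn n => (‖c k‖₊ : ℝ≥0∞)) := by
    refine le_trans ?_ (sum_rpow_rpow_le_lqNorm hp _ T)
    rw [← ENNReal.ofReal_rpow_of_nonneg (by positivity) (by positivity), hS, ha]
    gcongr with k hk
    rw [hcnorm, Set.indicator_of_mem (by exact_mod_cast hk),
      ENNReal.ofReal_rpow_of_nonneg (by positivity) hpt.le, ← Real.rpow_mul (hρ0 k).le]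
    refine ENNReal.ofReal_le_ofReal (Real.rpow_le_rpow_of_exponent_le (hρ k) ?_)
    have : (s + n * b) * p.toReal ≤ n := by
      rw [ha, mul_one_div] at hs
      exact (le_div_iff₀ hpt).mp hs
    linarith
  have hup : lqNorm q (fun k : Zn n => ENNReal.ofReal ((1 + ‖zc k‖) ^ s) * (‖c k‖₊ : ℝ≥0∞)) ≤
      ENNReal.ofReal (S ^ b) := by
    rw [← ENNReal.ofReal_rpow_of_nonneg (by positivity) (by positivity), hS]
    convert lqNorm_indicator_rpow_le q _ T using 2
    funext k
    by_cases hk : k ∈ (T : Set (Zn n))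
    · rw [hcnorm, Set.indicator_of_mem hk, Set.indicator_of_mem hk,
        ← ENNReal.ofReal_mul (by positivity), ← Real.rpow_add (hρ0 k),
        ENNReal.ofReal_rpow_of_nonneg (by positivity) (by positivity), ← Real.rpow_mul (hρ0 k).le]
      congr 2; ring
    · simp [hcnorm, hk]
  rw [← ENNReal.ofReal_le_ofReal_iff (by positivity), ENNReal.ofReal_mul hC]
  calc ENNReal.ofReal (S ^ a) ≤ _ := hlow
    _ ≤ _ := h c hc
    _ ≤ _ := by gcongr

theorem sequence_inequality_necessity_general
    (n : ℕ) (hn : 1 ≤ n) (p q : ℝ≥0∞) (hp : 1 ≤ p) (hpq : p < q) (s : ℝ)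
    (h : ∃ C : ℝ, 0 < C ∧ ∀ c : Zn n → ℂ, FinSupp c →
        lqNorm p (fun k : Zn n => (‖c k‖₊ : ℝ≥0∞)) ≤
          ENNReal.ofReal C *
            lqNorm q (fun k : Zn n =>
              ENNReal.ofReal ((1 + ‖zc k‖) ^ s) * (‖c k‖₊ : ℝ≥0∞))) :
    (n : ℝ) * ((1 / p).toReal - (1 / q).toReal) < s := by
  obtain ⟨C, hC, hineq⟩ := h
  have hp0 : p ≠ 0 := (zero_lt_one.trans_le hp).ne'
  have hba : (1 / q).toReal < (1 / p).toReal :=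
    ENNReal.toReal_strict_mono (by simp [hp0])
      (by simpa [one_div] using ENNReal.inv_lt_inv.mpr hpq)
  by_contra! hs
  have key := sum_rpow_le_mul_sum_rpow_of_weighted_bound hp0 hpq.ne_top hC.le
    (by linarith) hineq
  refine not_summable_one_add_norm_zc_rpow_neg hn
    (summable_of_sum_le (c := C ^ ((1 / p).toReal - (1 / q).toReal)⁻¹)
      (fun k => by positivity) fun T => ?_)
  rcases (Finset.sum_nonneg fun k _ => by positivity :
    0 ≤ ∑ k ∈ T, (1 + ‖zc k‖) ^ (-(n : ℝ))).eq_or_lt with hT | hT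
  · rw [← hT]; positivity
  · exact le_rpow_inv_sub_of_rpow_le_mul_rpow hT hba (key T)

/-- The counting argument in the proof of Lemma 4.1: if `p < q` and
`‖{c_k}‖_{ℓ^p} ≲ ‖{(1+|k|)^s c_k}‖_{ℓ^q}` for all finitely supported sequences,
then `s > n(1/p - 1/q)`. -/
theorem sequence_inequality_necessity
    (n : ℕ) (hn : 1 ≤ n) (p q : ℝ≥0∞) (hp : 1 ≤ p) (hq : 1 ≤ q) (hpq : p < q) (s : ℝ)
    (h : ∃ C : ℝ, 0 < C ∧ ∀ c : Zn n → ℂ, FinSupp c →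
        lqNorm p (fun k : Zn n => (‖c k‖₊ : ℝ≥0∞)) ≤
          ENNReal.ofReal C *
            lqNorm q (fun k : Zn n =>
              ENNReal.ofReal ((1 + ‖zc k‖) ^ s) * (‖c k‖₊ : ℝ≥0∞))) :
    (n : ℝ) * ((1 / p).toReal - (1 / q).toReal) < s :=
  sequence_inequality_necessity_general n hn p q hp hpq s h
end
end

section
/- Let n ≥ 1, let 1 ≤ q < p < ∞ and s ∈ ℝ. Suppose there exists C > 0 such that { ∑_{k∈ℤ^n, k≠0} |k|^{(n(1/p−1)+s)q} ( ∑_{ℓ∈ℤ^n, |k|/2 ≤ |ℓ| ≤ 2|k|} |c_ℓ|^p )^{q/p} }^{1/q} ≤ C ( ∑_{k≠0} |c_k|^p )^{1/p} for all finitely supported complex sequences {c_k}_{k∈ℤ^n∖{0}}. Then s < −n(1/p + 1/q − 1). -/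
noncomputable section

open MeasureTheory Real ENNReal

/-!
Test the inequality on `c` supported on the diagonal points `d_j = (2^j, …, 2^j)`, `j < N`, with
`c (d_j) = 2^{-j(γ+n)/q}` where `γ = (n(1/p-1)+s)q`. Each lattice point `k` of the cube
`[2^j, 2^{j+1})ⁿ` has `d_j` in its shell and `|k|^γ ≳ |d_j|^γ`, and the cube has `2^{jn}` points, so
it contributes `≳ 1` to the `q`-th power of the left side; the cubes are disjoint, so the left side
is `≳ N^{1/q}`. If `s ≥ -n(1/p+1/q-1)`, i.e. `γ + n ≥ 0`, then `|c| ≤ 1` and the right side is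
`≤ C N^{1/p}`, which is impossible for large `N` since `q < p`.
-/
open Finset Filter

theorem EuclideanSpace.sqrt_card_mul_le_norm {ι : Type*} [Fintype ι] {x : EuclideanSpace ℝ ι}
    {a : ℝ} (ha : 0 ≤ a) (h : ∀ i, a ≤ |x i|) : √(Fintype.card ι) * a ≤ ‖x‖ := by
  rw [EuclideanSpace.norm_eq, ← Real.sqrt_sq ha, ← Real.sqrt_mul (Nat.cast_nonneg _)]
  refine Real.sqrt_le_sqrt ?_
  simpa [Real.norm_eq_abs, sq_abs] using
    sum_le_sum fun i (_ : i ∈ univ) => pow_le_pow_left₀ ha (h i) 2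

theorem EuclideanSpace.norm_le_sqrt_card_mul {ι : Type*} [Fintype ι] {x : EuclideanSpace ℝ ι}
    {b : ℝ} (hb : 0 ≤ b) (h : ∀ i, |x i| ≤ b) : ‖x‖ ≤ √(Fintype.card ι) * b := by
  rw [EuclideanSpace.norm_eq, ← Real.sqrt_sq hb, ← Real.sqrt_mul (Nat.cast_nonneg _)]
  refine Real.sqrt_le_sqrt ?_
  simpa [Real.norm_eq_abs, sq_abs] using
    sum_le_sum fun i (_ : i ∈ univ) => pow_le_pow_left₀ (abs_nonneg _) (h i) 2

theorem ENNReal.coe_nnnorm_rpow {E : Type*} [SeminormedAddGroup E] {x : E} (hx : 0 < ‖x‖)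
    (r : ℝ) : (‖x‖₊ : ℝ≥0∞) ^ r = ENNReal.ofReal (‖x‖ ^ r) := by
  rw [← enorm_eq_nnnorm, ← ofReal_norm, ENNReal.ofReal_rpow_of_pos hx]

theorem min_one_two_rpow_mul_rpow_le {x y : ℝ} (hx : 0 < x) (hxy : x ≤ y) (hy : y ≤ 2 * x)
    (γ : ℝ) : min 1 (2 ^ γ) * x ^ γ ≤ y ^ γ := by
  rcases le_or_gt 0 γ with hγ | hγ
  · calc min 1 (2 ^ γ) * x ^ γ ≤ 1 * x ^ γ := by gcongr; exact min_le_left _ _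
      _ ≤ y ^ γ := by rw [one_mul]; exact Real.rpow_le_rpow hx.le hxy hγ
  · calc min 1 (2 ^ γ) * x ^ γ ≤ 2 ^ γ * x ^ γ := by gcongr; exact min_le_right _ _
      _ = (2 * x) ^ γ := (Real.mul_rpow zero_le_two hx.le).symm
      _ ≤ y ^ γ := Real.rpow_le_rpow_of_nonpos (hx.trans_le hxy) hy hγ.le

theorem exists_nat_mul_rpow_lt_rpow (C : ℝ) {κ p q : ℝ} (hκ : 0 < κ) (hq : 0 < q)
    (hqp : q < p) : ∃ N : ℕ, C * (N : ℝ) ^ (1 / p) < ((N : ℝ) * κ) ^ (1 / q) := by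
  have hexp : 0 < 1 / q - 1 / p := sub_pos.2 (one_div_lt_one_div_of_lt hq hqp)
  obtain ⟨N, hN, hN1⟩ := (((tendsto_rpow_atTop hexp).comp tendsto_natCast_atTop_atTop).eventually
    (eventually_gt_atTop (C / κ ^ (1 / q)))).and (eventually_ge_atTop 1) |>.exists
  have hN0 : (0 : ℝ) < N := by exact_mod_cast hN1
  rw [Function.comp_apply, div_lt_iff₀ (by positivity)] at hN
  refine ⟨N, ?_⟩
  calc C * (N : ℝ) ^ (1 / p) < (N : ℝ) ^ (1 / q - 1 / p) * κ ^ (1 / q) * (N : ℝ) ^ (1 / p) :=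
        mul_lt_mul_of_pos_right hN (by positivity)
    _ = ((N : ℝ) * κ) ^ (1 / q) := by
        rw [mul_right_comm, ← Real.rpow_add hN0, sub_add_cancel, Real.mul_rpow hN0.le hκ.le]

def dyadicDiag (n j : ℕ) : Zn n := fun _ => 2 ^ j

theorem dyadicDiag_injective {n : ℕ} (hn : 0 < n) : Function.Injective (dyadicDiag n) :=
  fun j j' h => by
    have h₀ : (2 : ℤ) ^ j = 2 ^ j' := congrFun h ⟨0, hn⟩
    exact Nat.pow_right_injective le_rfl (by exact_mod_cast h₀)

theorem dyadicDiag_ne_zero {n : ℕ} (hn : 0 < n) (j : ℕ) : dyadicDiag n j ≠ 0 :=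
  fun h => (pow_pos two_pos j).ne' (congrFun h ⟨0, hn⟩)

theorem norm_zc_dyadicDiag (n j : ℕ) : ‖zc (dyadicDiag n j)‖ = √n * 2 ^ j := by
  have h : ∀ i, |zc (dyadicDiag n j) i| = 2 ^ j := fun i => by simp [zc, dyadicDiag]
  refine le_antisymm ?_ ?_
  · simpa using EuclideanSpace.norm_le_sqrt_card_mul (by positivity) fun i => (h i).le
  · simpa using EuclideanSpace.sqrt_card_mul_le_norm (by positivity) fun i => (h i).ge

def dyadicCube (n j : ℕ) : Finset (Zn n) :=
  Fintype.piFinset fun _ => Ico (2 ^ j) (2 ^ (j + 1))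

theorem mem_dyadicCube {n j : ℕ} {k : Zn n} :
    k ∈ dyadicCube n j ↔ ∀ i, 2 ^ j ≤ k i ∧ k i < 2 ^ (j + 1) := by
  simp [dyadicCube]

theorem card_dyadicCube (n j : ℕ) : #(dyadicCube n j) = (2 ^ j) ^ n := by
  have : (2 : ℤ) ^ (j + 1) - 2 ^ j = (2 ^ j : ℕ) := by push_cast; ring
  simp only [dyadicCube, Fintype.card_piFinset, Int.card_Ico, this, Int.toNat_natCast,
    prod_const, card_univ, Fintype.card_fin]

theorem ne_zero_of_mem_dyadicCube {n j : ℕ} (hn : 0 < n) {k : Zn n} (hk : k ∈ dyadicCube n j) :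
    k ≠ 0 := by
  rintro rfl
  have := (mem_dyadicCube.1 hk ⟨0, hn⟩).1
  simp only [Pi.zero_apply] at this
  exact this.not_gt (pow_pos two_pos j)

theorem pairwiseDisjoint_dyadicCube {n : ℕ} (hn : 0 < n) (s : Set ℕ) :
    s.PairwiseDisjoint (dyadicCube n) := by
  intro j _ j' _ hne
  refine disjoint_left.2 fun k hk hk' => ?_
  have h := mem_dyadicCube.1 hk ⟨0, hn⟩
  have h' := mem_dyadicCube.1 hk' ⟨0, hn⟩
  rcases Nat.lt_or_gt_of_ne hne with hlt | hlt
  · have : (2 : ℤ) ^ (j + 1) ≤ 2 ^ j' := pow_le_pow_right₀ one_le_two hlt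
    omega
  · have : (2 : ℤ) ^ (j' + 1) ≤ 2 ^ j := pow_le_pow_right₀ one_le_two hlt
    omega

theorem norm_zc_mem_Icc_of_mem_dyadicCube {n j : ℕ} {k : Zn n} (hk : k ∈ dyadicCube n j) :
    ‖zc k‖ ∈ Set.Icc ‖zc (dyadicDiag n j)‖ (2 * ‖zc (dyadicDiag n j)‖) := by
  have h : ∀ i, (2 : ℝ) ^ j ≤ |zc k i| ∧ |zc k i| ≤ 2 ^ (j + 1) := fun i => by
    obtain ⟨h₁, h₂⟩ := mem_dyadicCube.1 hk i
    have h₀ : (0 : ℤ) ≤ k i := (pow_pos two_pos j).le.trans h₁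
    simp only [zc, PiLp.toLp_apply, abs_of_nonneg (Int.cast_nonneg h₀)]
    exact ⟨by exact_mod_cast h₁, by exact_mod_cast h₂.le⟩
  rw [norm_zc_dyadicDiag]
  refine ⟨?_, ?_⟩
  · simpa using EuclideanSpace.sqrt_card_mul_le_norm (by positivity) fun i => (h i).1
  · simpa [pow_succ, mul_comm, mul_assoc] using
      EuclideanSpace.norm_le_sqrt_card_mul (by positivity) fun i => (h i).2

def dyadicDiagSeq (n N : ℕ) (b : ℕ → ℝ) : Zn n → ℂ :=
  Function.extend (dyadicDiag n) (fun j => if j < N then (b j : ℂ) else 0) 0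

section dyadicDiagSeq

variable {n N : ℕ} {b : ℕ → ℝ}

theorem dyadicDiagSeq_dyadicDiag (hn : 0 < n) {j : ℕ} (hj : j < N) :
    dyadicDiagSeq n N b (dyadicDiag n j) = b j := by
  rw [dyadicDiagSeq, (dyadicDiag_injective hn).extend_apply, if_pos hj]

theorem dyadicDiagSeq_eq_zero (hn : 0 < n) {l : Zn n} (hl : ∀ j < N, dyadicDiag n j ≠ l) :
    dyadicDiagSeq n N b l = 0 := by
  by_cases h : ∃ j, dyadicDiag n j = l
  · obtain ⟨j, rfl⟩ := h
    rw [dyadicDiagSeq, (dyadicDiag_injective hn).extend_apply,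
      if_neg fun hj => hl j hj rfl]
  · exact Function.extend_apply' _ _ _ h

theorem support_dyadicDiagSeq_subset (hn : 0 < n) :
    Function.support (dyadicDiagSeq n N b) ⊆ (range N).image (dyadicDiag n) := by
  intro l hl
  by_contra hmem
  exact hl <| dyadicDiagSeq_eq_zero hn fun j hj hjl => hmem (by simpa [← hjl] using ⟨j, hj, rfl⟩)

theorem finSupp_dyadicDiagSeq (hn : 0 < n) : FinSupp (dyadicDiagSeq n N b) :=
  (finite_toSet _).subset (support_dyadicDiagSeq_subset hn)

theorem dyadicDiagSeq_zero (hn : 0 < n) : dyadicDiagSeq n N b 0 = 0 :=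
  dyadicDiagSeq_eq_zero hn fun j _ => dyadicDiag_ne_zero hn j

theorem norm_dyadicDiagSeq_le_one (hn : 0 < n) (hb : ∀ j, |b j| ≤ 1) (l : Zn n) :
    ‖dyadicDiagSeq n N b l‖ ≤ 1 := by
  by_cases h : ∃ j < N, dyadicDiag n j = l
  · obtain ⟨j, hj, rfl⟩ := h
    simpa [dyadicDiagSeq_dyadicDiag hn hj] using hb j
  · push Not at h
    simp [dyadicDiagSeq_eq_zero hn h]

theorem tsum_nnnorm_rpow_dyadicDiagSeq_le (hn : 0 < n) {p : ℝ} (hp : 0 < p)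
    (hb : ∀ j, |b j| ≤ 1) : ∑' l, (‖dyadicDiagSeq n N b l‖₊ : ℝ≥0∞) ^ p ≤ N := by
  rw [tsum_eq_sum (s := (range N).image (dyadicDiag n)) fun l hl => by
    rw [Function.notMem_support.1 fun h => hl (support_dyadicDiagSeq_subset hn h), nnnorm_zero,
      ENNReal.coe_zero, ENNReal.zero_rpow_of_pos hp]]
  calc ∑ l ∈ (range N).image (dyadicDiag n), (‖dyadicDiagSeq n N b l‖₊ : ℝ≥0∞) ^ p
      ≤ ∑ _l ∈ (range N).image (dyadicDiag n), 1 := by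
        refine sum_le_sum fun l _ => ENNReal.rpow_le_one ?_ hp.le
        exact_mod_cast norm_dyadicDiagSeq_le_one hn hb l
    _ ≤ N := by
        rw [sum_const, nsmul_one]
        exact_mod_cast card_image_le.trans (card_range N).le

end dyadicDiagSeq

def shellMass {n : ℕ} (p : ℝ) (c : Zn n → ℂ) (k : Zn n) : ℝ≥0∞ :=
  ∑' l : Zn n, if ‖zc k‖ / 2 ≤ ‖zc l‖ ∧ ‖zc l‖ ≤ 2 * ‖zc k‖ then (‖c l‖₊ : ℝ≥0∞) ^ p else 0

theorem nnnorm_rpow_le_shellMass {n : ℕ} {p : ℝ} (c : Zn n → ℂ) {k l : Zn n}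
    (hkl : ‖zc k‖ / 2 ≤ ‖zc l‖ ∧ ‖zc l‖ ≤ 2 * ‖zc k‖) :
    (‖c l‖₊ : ℝ≥0∞) ^ p ≤ shellMass p c k := by
  unfold shellMass
  exact (if_pos hkl).symm.le.trans (ENNReal.le_tsum l)

section shellLowerBound

variable {n : ℕ} {p q : ℝ}

theorem ofReal_le_rpow_mul_shellMass_dyadicDiagSeq (hn : 0 < n) (hp : 0 < p) (hq : 0 < q)
    {N : ℕ} {b : ℕ → ℝ} {j : ℕ} (hj : j < N) (hb : 0 < b j) {k : Zn n} (hk : k ∈ dyadicCube n j)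
    (γ : ℝ) :
    ENNReal.ofReal (min 1 (2 ^ γ) * ‖zc (dyadicDiag n j)‖ ^ γ * b j ^ q) ≤
      (‖zc k‖₊ : ℝ≥0∞) ^ γ * shellMass p (dyadicDiagSeq n N b) k ^ (q / p) := by
  obtain ⟨hxy, hy⟩ := norm_zc_mem_Icc_of_mem_dyadicCube hk
  have hx : 0 < ‖zc (dyadicDiag n j)‖ := by rw [norm_zc_dyadicDiag]; positivity
  have hweight : ENNReal.ofReal (min 1 (2 ^ γ) * ‖zc (dyadicDiag n j)‖ ^ γ) ≤
      (‖zc k‖₊ : ℝ≥0∞) ^ γ := by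
    rw [ENNReal.coe_nnnorm_rpow (hx.trans_le hxy)]
    exact ENNReal.ofReal_le_ofReal (min_one_two_rpow_mul_rpow_le hx hxy hy γ)
  have hc : ‖dyadicDiagSeq n N b (dyadicDiag n j)‖ = b j := by
    rw [dyadicDiagSeq_dyadicDiag hn hj, Complex.norm_real, Real.norm_of_nonneg hb.le]
  have hmass : ENNReal.ofReal (b j ^ q) ≤ shellMass p (dyadicDiagSeq n N b) k ^ (q / p) :=
    calc ENNReal.ofReal (b j ^ q)
        = ((‖dyadicDiagSeq n N b (dyadicDiag n j)‖₊ : ℝ≥0∞) ^ p) ^ (q / p) := by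
          rw [ENNReal.coe_nnnorm_rpow (hc ▸ hb), hc,
            ENNReal.ofReal_rpow_of_nonneg (by positivity) (by positivity),
            ← Real.rpow_mul hb.le, mul_div_cancel₀ _ hp.ne']
      _ ≤ _ := ENNReal.rpow_le_rpow
          (nnnorm_rpow_le_shellMass _ ⟨by linarith, by linarith⟩) (by positivity)
  rw [ENNReal.ofReal_mul (by positivity)]
  exact mul_le_mul' hweight hmass

theorem ofReal_mul_le_tsum_rpow_mul_shellMass (hn : 0 < n) (hp : 0 < p) (hq : 0 < q)
    (N : ℕ) (γ : ℝ) :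
    ENNReal.ofReal (N * (min 1 (2 ^ γ) * √n ^ γ)) ≤
      ∑' k : Zn n, if k = 0 then 0 else (‖zc k‖₊ : ℝ≥0∞) ^ γ *
        shellMass p (dyadicDiagSeq n N fun j => ((2 : ℝ) ^ j) ^ (-(γ + n) / q)) k ^ (q / p) := by
  set κ := min 1 (2 ^ γ) * √n ^ γ
  set F : Zn n → ℝ≥0∞ := fun k => if k = 0 then 0 else (‖zc k‖₊ : ℝ≥0∞) ^ γ *
    shellMass p (dyadicDiagSeq n N fun j => ((2 : ℝ) ^ j) ^ (-(γ + n) / q)) k ^ (q / p)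
  have hweights (j : ℕ) : min 1 (2 ^ γ) * ‖zc (dyadicDiag n j)‖ ^ γ *
      (((2 : ℝ) ^ j) ^ (-(γ + n) / q)) ^ q = κ / ((2 : ℝ) ^ j) ^ n := by
    have h2 : (0 : ℝ) < 2 ^ j := by positivity
    rw [norm_zc_dyadicDiag, Real.mul_rpow (by positivity) h2.le, ← Real.rpow_mul h2.le,
      div_mul_cancel₀ _ hq.ne']
    calc min 1 (2 ^ γ) * (√n ^ γ * ((2 : ℝ) ^ j) ^ γ) * ((2 : ℝ) ^ j) ^ (-(γ + n))
        = κ * ((2 : ℝ) ^ j) ^ (γ + -(γ + n)) := by rw [Real.rpow_add h2]; ring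
      _ = κ / ((2 : ℝ) ^ j) ^ n := by
        rw [show γ + -(γ + n) = -(n : ℝ) by ring, Real.rpow_neg h2.le, Real.rpow_natCast,
          div_eq_mul_inv]
  have hcube : ∀ j < N, ENNReal.ofReal κ ≤ ∑ k ∈ dyadicCube n j, F k := by
    intro j hj
    calc ENNReal.ofReal κ = #(dyadicCube n j) • ENNReal.ofReal (κ / ((2 : ℝ) ^ j) ^ n) := by
          rw [card_dyadicCube, nsmul_eq_mul, ← ENNReal.ofReal_natCast,
            ← ENNReal.ofReal_mul (by positivity)]
          push_cast
          field_simp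
      _ ≤ ∑ k ∈ dyadicCube n j, F k := by
          refine card_nsmul_le_sum _ _ _ fun k hk => ?_
          simp only [F, if_neg (ne_zero_of_mem_dyadicCube hn hk), ← hweights]
          exact ofReal_le_rpow_mul_shellMass_dyadicDiagSeq hn hp hq hj (by positivity) hk γ
  calc ENNReal.ofReal (N * κ) = ∑ _j ∈ range N, ENNReal.ofReal κ := by
        simp [ENNReal.ofReal_mul]
    _ ≤ ∑ j ∈ range N, ∑ k ∈ dyadicCube n j, F k :=
        sum_le_sum fun j hj => hcube j (mem_range.1 hj)
    _ = ∑ k ∈ (range N).biUnion (dyadicCube n), F k :=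
        (sum_biUnion (pairwiseDisjoint_dyadicCube hn _)).symm
    _ ≤ ∑' k, F k := ENNReal.sum_le_tsum _

end shellLowerBound

/-- The counting argument in the proof of Lemma 4.3: if `1 ≤ q < p < ∞` and the
dyadic-shell sequence inequality holds for all finitely supported sequences on
`ℤⁿ \ {0}`, then `s < -n(1/p + 1/q - 1)`. -/
theorem shell_sequence_inequality_necessity
    (n : ℕ) (hn : 1 ≤ n) (p q : ℝ) (hq : 1 ≤ q) (hqp : q < p) (s : ℝ)
    (h : ∃ C : ℝ, 0 < C ∧ ∀ c : Zn n → ℂ, FinSupp c → c 0 = 0 →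
        (∑' k : Zn n, if k = 0 then 0 else
            (‖zc k‖₊ : ℝ≥0∞) ^ (((n : ℝ) * (1 / p - 1) + s) * q) *
              (∑' l : Zn n, if ‖zc k‖ / 2 ≤ ‖zc l‖ ∧ ‖zc l‖ ≤ 2 * ‖zc k‖ then
                  (‖c l‖₊ : ℝ≥0∞) ^ p else 0) ^ (q / p)) ^ (1 / q)
          ≤ ENNReal.ofReal C *
              (∑' k : Zn n, (‖c k‖₊ : ℝ≥0∞) ^ p) ^ (1 / p)) :
    s < -(n : ℝ) * (1 / p + 1 / q - 1) := by
  by_contra hs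
  obtain ⟨C, hC, hineq⟩ := h
  have hq0 : 0 < q := by linarith
  have hp0 : 0 < p := by linarith
  set γ := ((n : ℝ) * (1 / p - 1) + s) * q with hγ_def
  have hγ : 0 ≤ γ + n := by
    rw [show γ + n = q * (s + n * (1 / p + 1 / q - 1)) by rw [hγ_def]; field_simp; ring]
    exact mul_nonneg hq0.le (by linarith)
  have hb (j : ℕ) : |((2 : ℝ) ^ j) ^ (-(γ + n) / q)| ≤ 1 := by
    rw [abs_of_nonneg (by positivity)]
    exact Real.rpow_le_one_of_one_le_of_nonpos (one_le_pow₀ one_le_two)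
      (div_nonpos_of_nonpos_of_nonneg (by linarith) hq0.le)
  obtain ⟨N, hN⟩ := exists_nat_mul_rpow_lt_rpow C (κ := min 1 (2 ^ γ) * √n ^ γ)
    (by positivity) hq0 hqp
  have hlower := ENNReal.rpow_le_rpow (ofReal_mul_le_tsum_rpow_mul_shellMass hn hp0 hq0 N γ)
    (one_div_nonneg.2 hq0.le)
  have hupper := ENNReal.rpow_le_rpow (tsum_nnnorm_rpow_dyadicDiagSeq_le (N := N) hn hp0 hb)
    (one_div_nonneg.2 hp0.le)
  have key := (hlower.trans (hineq _ (finSupp_dyadicDiagSeq hn) (dyadicDiagSeq_zero hn))).trans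
    (mul_le_mul_right hupper _)
  rw [ENNReal.ofReal_rpow_of_nonneg (by positivity) (one_div_nonneg.2 hq0.le),
    ← ENNReal.ofReal_natCast, ENNReal.ofReal_rpow_of_nonneg (Nat.cast_nonneg _)
    (one_div_nonneg.2 hp0.le), ← ENNReal.ofReal_mul hC.le,
    ENNReal.ofReal_le_ofReal_iff (by positivity)] at key
  exact hN.not_ge key
end
end

section
/- Let n ≥ 1 and let φ, η ∈ S(ℝ^n) with supp φ ⊂ [−1,1]^n and supp η ⊂ [−1/2,1/2]^n. Then for every N ≥ 1 there exists a constant C_N > 0 such that for all x ∈ ℝ^n and all k, ℓ ∈ ℤ^n, |∫_{ℝ^n} e^{i(x−ℓ)·ξ} φ(ξ−k) η̂(ξ−ℓ) dξ| ≤ C_N (1+|x−ℓ|)^{−N} (1+|k−ℓ|)^{−N}. -/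
noncomputable section

open MeasureTheory Real ENNReal

/-! Substituting `ξ = ζ + k`, the integral is a unimodular phase times the Fourier transform,
at `-(x - ℓ)/2π`, of `h_m = φ · η̂(· - m)` with `m = ℓ - k`. On the support of `φ`, a bounded
set, `1 + |m|` is comparable to `1 + |ζ - m|`, so the decay of `η̂` makes the family
`(1 + |m|)^N h_m` bounded in Schwartz space. The Fourier transform is continuous on `𝓢`, hence
maps it to a bounded family, and this gives the decay `(1 + |x - ℓ|)^{-N}` uniformly in `m`. -/

open SchwartzMap Bornology Metric FourierTransform
open scoped ContDiff

namespace SchwartzMap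

variable {E F : Type*} [NormedAddCommGroup E] [NormedSpace ℝ E]
  [NormedAddCommGroup F] [NormedSpace ℝ F]

theorem isVonNBounded_range_of_forall_le {ι : Type*} (f : ι → 𝓢(E, F))
    (hf : ∀ k j : ℕ, ∃ C, ∀ i x, ‖x‖ ^ k * ‖iteratedFDeriv ℝ j (f i) x‖ ≤ C) :
    IsVonNBounded ℝ (Set.range f) := by
  refine (schwartz_withSeminorms ℝ E F).isVonNBounded_iff_seminorm_bounded.2 fun ⟨k, j⟩ => ?_
  obtain ⟨C, hC⟩ := hf k j
  refine ⟨max C 0 + 1, by positivity, ?_⟩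
  rintro _ ⟨i, rfl⟩
  exact (seminorm_le_bound ℝ k j (f i) (le_max_right C 0)
    fun x => (hC i x).trans (le_max_left C 0)).trans_lt (lt_add_one _)

theorem exists_one_add_norm_pow_mul_le_of_isVonNBounded {s : Set 𝓢(E, F)}
    (hs : IsVonNBounded ℝ s) (k : ℕ) :
    ∃ C, ∀ f ∈ s, ∀ x, (1 + ‖x‖) ^ k * ‖f x‖ ≤ C := by
  obtain ⟨r, -, hr⟩ :=
    (schwartz_withSeminorms ℝ E F).isVonNBounded_iff_finset_seminorm_bounded.1 hs
      (Finset.Iic (k, 0))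
  refine ⟨2 ^ k * r, fun f hf x => ?_⟩
  have := one_add_le_sup_seminorm_apply (𝕜 := ℝ) (m := (k, 0)) le_rfl le_rfl f x
  rw [norm_iteratedFDeriv_zero] at this
  exact this.trans (mul_le_mul_of_nonneg_left (hr f hf).le (by positivity))

end SchwartzMap

theorem norm_iteratedFDeriv_smul_le_of_forall_le {𝕜 E F : Type*} [NontriviallyNormedField 𝕜]
    [NormedAlgebra ℝ 𝕜] [NormedAddCommGroup E] [NormedSpace ℝ E] [NormedAddCommGroup F]
    [NormedSpace ℝ F] [NormedSpace 𝕜 F] [IsScalarTower ℝ 𝕜 F] {f : E → 𝕜} {g : E → F}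
    (hf : ContDiff ℝ ∞ f) (hg : ContDiff ℝ ∞ g) {x : E} {j : ℕ} {A B : ℝ}
    (hfA : ∀ a ≤ j, ‖iteratedFDeriv ℝ a f x‖ ≤ A) (hgB : ∀ b ≤ j, ‖iteratedFDeriv ℝ b g x‖ ≤ B) :
    ‖iteratedFDeriv ℝ j (fun z => f z • g z) x‖ ≤ 2 ^ j * A * B := by
  have hA : 0 ≤ A := (norm_nonneg _).trans (hfA 0 j.zero_le)
  calc ‖iteratedFDeriv ℝ j (fun z => f z • g z) x‖
      ≤ ∑ a ∈ Finset.range (j + 1), (j.choose a : ℝ) *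
          ‖iteratedFDeriv ℝ a f x‖ * ‖iteratedFDeriv ℝ (j - a) g x‖ :=
        norm_iteratedFDeriv_smul_le hf hg x (mod_cast le_top)
    _ ≤ ∑ a ∈ Finset.range (j + 1), (j.choose a : ℝ) * A * B := by
        gcongr with a ha
        · exact hfA a (Nat.lt_succ_iff.1 (Finset.mem_range.1 ha))
        · exact hgB _ (Nat.sub_le j a)
    _ = 2 ^ j * A * B := by
        rw [← Finset.sum_mul, ← Finset.sum_mul, ← Nat.cast_sum, Nat.sum_range_choose,
          Nat.cast_pow, Nat.cast_ofNat]

theorem one_add_norm_le_mul_one_add_norm_sub {E : Type*} [SeminormedAddCommGroup E] {x c : E}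
    {R : ℝ} (hR : 0 ≤ R) (hx : ‖x‖ ≤ R) : 1 + ‖c‖ ≤ (1 + R) * (1 + ‖x - c‖) := by
  have : ‖c‖ ≤ ‖x‖ + ‖x - c‖ := by simpa using norm_sub_le x (x - c)
  nlinarith [norm_nonneg (x - c)]

section LocalizedProducts

variable {E F : Type*} [NormedAddCommGroup E] [NormedSpace ℝ E]
  [NormedAddCommGroup F] [NormedSpace ℂ F]

theorem exists_one_add_norm_pow_mul_norm_iteratedFDeriv_smul_comp_sub_le
    (φ : 𝓢(E, ℂ)) (ψ : 𝓢(E, F)) {R : ℝ} (hR : 0 ≤ R) (hφR : tsupport φ ⊆ closedBall 0 R)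
    (k j N : ℕ) :
    ∃ C, ∀ c x : E,
      (1 + ‖c‖) ^ N * (‖x‖ ^ k * ‖iteratedFDeriv ℝ j (fun z => φ z • ψ (z - c)) x‖) ≤ C := by
  set A := (Finset.Iic (0, j)).sup (fun m => SchwartzMap.seminorm ℝ m.1 m.2) φ
  set S := 2 ^ N * (Finset.Iic (N, j)).sup (fun m => SchwartzMap.seminorm ℝ m.1 m.2) ψ
  refine ⟨(1 + R) ^ N * (R ^ k * (2 ^ j * A * S)), fun c x => ?_⟩
  by_cases hx : x ∈ tsupport φ
  · set D := ‖iteratedFDeriv ℝ j (fun z => φ z • ψ (z - c)) x‖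
    have hψc : ContDiff ℝ ∞ fun z => ψ (z - c) :=
      (ψ.smooth ⊤).comp (contDiff_id.sub contDiff_const)
    have hxR : ‖x‖ ≤ R := by simpa using hφR hx
    have hw : 0 < (1 + ‖x - c‖) ^ N := by positivity
    have hD : (1 + ‖x - c‖) ^ N * D ≤ 2 ^ j * A * S := by
      rw [← le_div_iff₀' hw, mul_div_assoc]
      refine norm_iteratedFDeriv_smul_le_of_forall_le (φ.smooth ⊤) hψc (fun a ha => ?_)
        (fun b hb => ?_)
      · simpa using one_add_le_sup_seminorm_apply (𝕜 := ℝ) (m := (0, j)) le_rfl ha φ x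
      · rw [iteratedFDeriv_comp_sub, le_div_iff₀' hw]
        exact one_add_le_sup_seminorm_apply (𝕜 := ℝ) (m := (N, j)) le_rfl hb ψ (x - c)
    calc (1 + ‖c‖) ^ N * (‖x‖ ^ k * D)
        ≤ ((1 + R) * (1 + ‖x - c‖)) ^ N * (R ^ k * D) := by
          gcongr
          exact one_add_norm_le_mul_one_add_norm_sub hR hxR
      _ = (1 + R) ^ N * (R ^ k * ((1 + ‖x - c‖) ^ N * D)) := by
          rw [mul_pow]; ring
      _ ≤ (1 + R) ^ N * (R ^ k * (2 ^ j * A * S)) := by gcongr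
  · have : iteratedFDeriv ℝ j (fun z => φ z • ψ (z - c)) x = 0 :=
      Function.notMem_support.1 fun h =>
        hx (tsupport_smul_subset_left _ _ (support_iteratedFDeriv_subset j h))
    rw [this, norm_zero, mul_zero, mul_zero]
    positivity

theorem coe_smulLeftCLM_compSubConstCLM (φ : 𝓢(E, ℂ)) (ψ : 𝓢(E, F)) (c : E) :
    ⇑(smulLeftCLM F ⇑φ (compSubConstCLM ℂ c ψ)) = fun z => φ z • ψ (z - c) := by
  ext z
  simp [smulLeftCLM_apply_apply φ.hasTemperateGrowth]

theorem isVonNBounded_range_one_add_norm_pow_smul_smulLeftCLM_compSubConstCLM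
    (φ : 𝓢(E, ℂ)) (hφ : HasCompactSupport φ) (ψ : 𝓢(E, F)) (N : ℕ) :
    IsVonNBounded ℝ (Set.range fun c : E =>
      ((1 + ‖c‖) ^ N : ℝ) • smulLeftCLM F ⇑φ (compSubConstCLM ℂ c ψ)) := by
  obtain ⟨R, hR⟩ := hφ.isCompact.isBounded.subset_closedBall 0
  refine isVonNBounded_range_of_forall_le _ fun k j => ?_
  obtain ⟨C, hC⟩ := exists_one_add_norm_pow_mul_norm_iteratedFDeriv_smul_comp_sub_le φ ψ
    (le_max_right R 0) (hR.trans (closedBall_subset_closedBall (le_max_left R 0))) k j N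
  refine ⟨C, fun c x => ?_⟩
  rw [FunLike.coe_smul, iteratedFDeriv_const_smul_apply ((smulLeftCLM F ⇑φ _).smooth _).contDiffAt,
    coe_smulLeftCLM_compSubConstCLM, norm_smul, Real.norm_of_nonneg (by positivity)]
  simpa only [mul_left_comm] using hC c x

end LocalizedProducts

section Fourier

variable {V F : Type*} [NormedAddCommGroup V] [InnerProductSpace ℝ V] [FiniteDimensional ℝ V]
  [MeasurableSpace V] [BorelSpace V] [NormedAddCommGroup F] [NormedSpace ℂ F]

theorem exists_one_add_norm_pow_mul_norm_fourier_smul_comp_sub_le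
    (φ : 𝓢(V, ℂ)) (hφ : HasCompactSupport φ) (ψ : 𝓢(V, F)) (N : ℕ) :
    ∃ C, ∀ c w : V, (1 + ‖w‖) ^ N * ((1 + ‖c‖) ^ N * ‖𝓕 (fun z => φ z • ψ (z - c)) w‖) ≤ C := by
  obtain ⟨C, hC⟩ := exists_one_add_norm_pow_mul_le_of_isVonNBounded
    ((isVonNBounded_range_one_add_norm_pow_smul_smulLeftCLM_compSubConstCLM φ hφ ψ N).image
      (fourierTransformCLM ℝ)) N
  refine ⟨C, fun c w => ?_⟩
  have := hC _ ⟨_, ⟨c, rfl⟩, rfl⟩ w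
  rwa [map_smul, smul_apply, norm_smul, Real.norm_of_nonneg (by positivity),
    fourierTransformCLM_apply, fourier_coe, coe_smulLeftCLM_compSubConstCLM] at this

theorem integral_exp_inner_smul_smul_eq_fourier (φ : V → ℂ) (ψ : V → F) (y a b : V) :
    ∫ ξ, Complex.exp (Complex.I * ((inner ℝ y ξ : ℝ) : ℂ)) • (φ (ξ - a) • ψ (ξ - b)) =
      Complex.exp (Complex.I * ((inner ℝ y a : ℝ) : ℂ)) •
        𝓕 (fun z => φ z • ψ (z - (b - a))) (-(2 * π)⁻¹ • y) := by
  rw [← integral_add_right_eq_self _ a, Real.fourier_eq', ← integral_smul]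
  congr 1
  ext z
  have hphase : -2 * π * inner ℝ z (-(2 * π)⁻¹ • y) = inner ℝ y z := by
    rw [inner_smul_right, real_inner_comm]
    field_simp
  rw [hphase, inner_add_right, add_sub_cancel_right, show z + a - b = z - (b - a) by abel,
    ← mul_smul (Complex.exp (Complex.I * ((inner ℝ y a : ℝ) : ℂ)))]
  congr 1
  push_cast
  rw [mul_add, Complex.exp_add]
  ring_nf

theorem one_add_norm_le_two_pi_mul_one_add_norm_smul {E : Type*} [SeminormedAddCommGroup E]
    [NormedSpace ℝ E] (y : E) : 1 + ‖y‖ ≤ 2 * π * (1 + ‖-(2 * π)⁻¹ • y‖) := by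
  have hπ : 1 ≤ 2 * π := by linarith [pi_gt_three]
  rw [norm_smul, norm_neg, norm_inv, Real.norm_of_nonneg (by positivity), mul_add, mul_one,
    mul_inv_cancel_left₀ (by positivity)]
  linarith

theorem exists_norm_integral_exp_inner_smul_smul_le (φ : 𝓢(V, ℂ)) (hφ : HasCompactSupport φ)
    (ψ : 𝓢(V, F)) (N : ℕ) :
    ∃ C, 0 < C ∧ ∀ y a b : V,
      ‖∫ ξ, Complex.exp (Complex.I * ((inner ℝ y ξ : ℝ) : ℂ)) • (φ (ξ - a) • ψ (ξ - b))‖ ≤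
        C * (1 + ‖y‖) ^ (-(N : ℝ)) * (1 + ‖a - b‖) ^ (-(N : ℝ)) := by
  obtain ⟨C, hC⟩ := exists_one_add_norm_pow_mul_norm_fourier_smul_comp_sub_le φ hφ ψ N
  refine ⟨(2 * π) ^ N * max C 1, by positivity, fun y a b => ?_⟩
  set w : V := -(2 * π)⁻¹ • y
  set Fw := ‖𝓕 (fun z => φ z • ψ (z - (b - a))) w‖
  rw [integral_exp_inner_smul_smul_eq_fourier, norm_smul, mul_comm Complex.I,
    Complex.norm_exp_ofReal_mul_I, one_mul, Real.rpow_neg (by positivity),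
    Real.rpow_neg (by positivity), Real.rpow_natCast, Real.rpow_natCast, mul_assoc, ← mul_inv,
    ← div_eq_mul_inv, le_div_iff₀ (by positivity), norm_sub_rev a b]
  calc Fw * ((1 + ‖y‖) ^ N * (1 + ‖b - a‖) ^ N)
      ≤ Fw * ((2 * π * (1 + ‖w‖)) ^ N * (1 + ‖b - a‖) ^ N) := by
        gcongr
        exact one_add_norm_le_two_pi_mul_one_add_norm_smul y
    _ = (2 * π) ^ N * ((1 + ‖w‖) ^ N * ((1 + ‖b - a‖) ^ N * Fw)) := by
        rw [mul_pow]; ring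
    _ ≤ (2 * π) ^ N * max C 1 := by gcongr; exact (hC (b - a) w).trans (le_max_left C 1)

end Fourier

theorem FT_apply_eq_fourier {n : ℕ} (f : En n → ℂ) (ξ : En n) :
    FT f ξ = 𝓕 f ((2 * π)⁻¹ • ξ) := by
  rw [FT, Real.fourier_eq']
  congr 1
  ext x
  rw [inner_smul_right, smul_eq_mul, mul_comm (f x)]
  congr 2
  push_cast
  field_simp

theorem exists_schwartzMap_coe_eq_FT {n : ℕ} (η : 𝓢(En n, ℂ)) :
    ∃ ψ : 𝓢(En n, ℂ), ⇑ψ = FT ⇑η := by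
  refine ⟨compCLMOfContinuousLinearEquiv ℂ
    (ContinuousLinearEquiv.smulLeft (Units.mk0 (2 * π)⁻¹ (by positivity))) (𝓕 η), ?_⟩
  ext ξ
  simp only [compCLMOfContinuousLinearEquiv_apply, Function.comp_apply,
    ContinuousLinearEquiv.smulLeft_apply_apply, Units.smul_mk0, FT_apply_eq_fourier, fourier_coe]

theorem zc_sub {n : ℕ} (k l : Zn n) : zc (k - l) = zc k - zc l := by
  ext i
  simp [zc]

theorem hasCompactSupport_of_support_subset_cube {n : ℕ} {f : En n → ℂ} {r : ℝ}
    (hf : Function.support f ⊆ {ξ : En n | ∀ i, |ξ i| ≤ r}) : HasCompactSupport f := by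
  refine HasCompactSupport.intro ?_ fun ξ hξ => Function.notMem_support.1 fun h => hξ (hf h)
  have : {ξ : En n | ∀ i, |ξ i| ≤ r} =
      EuclideanSpace.equiv (Fin n) ℝ ⁻¹' Set.univ.pi fun _ => Set.Icc (-r) r := by
    ext ξ
    simp only [Set.mem_preimage, Set.mem_univ_pi, Set.mem_Icc, abs_le]
    rfl
  rw [this]
  exact (EuclideanSpace.equiv (Fin n) ℝ).toHomeomorph.isCompact_preimage.2
    (isCompact_univ_pi fun _ => isCompact_Icc)

theorem oscillatory_integral_decay_general
    (n : ℕ) (φ η : SchwartzMap (En n) ℂ)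
    (hφ : Function.support ⇑φ ⊆ {ξ : En n | ∀ i, |ξ i| ≤ 1}) :
    ∀ N : ℕ, 1 ≤ N → ∃ C : ℝ, 0 < C ∧ ∀ (x : En n) (k l : Zn n),
      ‖∫ ξ : En n,
          Complex.exp (Complex.I * ((inner ℝ (x - zc l) ξ : ℝ) : ℂ)) *
            φ (ξ - zc k) * FT ⇑η (ξ - zc l)‖ ≤
        C * (1 + ‖x - zc l‖) ^ (-(N : ℝ)) * (1 + ‖zc (k - l)‖) ^ (-(N : ℝ)) := by
  intro N _
  obtain ⟨ψ, hψ⟩ := exists_schwartzMap_coe_eq_FT η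
  obtain ⟨C, hC0, hC⟩ := exists_norm_integral_exp_inner_smul_smul_le φ
    (hasCompactSupport_of_support_subset_cube hφ) ψ N
  refine ⟨C, hC0, fun x k l => ?_⟩
  simpa only [← hψ, smul_eq_mul, mul_assoc, zc_sub] using hC (x - zc l) (zc k) (zc l)

/-- Estimate (3.2.2): the oscillatory integral bound
`|∫ e^{i(x-ℓ)·ξ} φ(ξ-k) η̂(ξ-ℓ) dξ| ≤ C_N (1+|x-ℓ|)^{-N} (1+|k-ℓ|)^{-N}`. -/
theorem oscillatory_integral_decay
    (n : ℕ) (hn : 1 ≤ n) (φ η : SchwartzMap (En n) ℂ)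
    (hφ : Function.support ⇑φ ⊆ {ξ : En n | ∀ i, |ξ i| ≤ 1})
    (hη : Function.support ⇑η ⊆ {x : En n | ∀ i, |x i| ≤ 1 / 2}) :
    ∀ N : ℕ, 1 ≤ N → ∃ C : ℝ, 0 < C ∧ ∀ (x : En n) (k l : Zn n),
      ‖∫ ξ : En n,
          Complex.exp (Complex.I * ((inner ℝ (x - zc l) ξ : ℝ) : ℂ)) *
            φ (ξ - zc k) * FT ⇑η (ξ - zc l)‖ ≤
        C * (1 + ‖x - zc l‖) ^ (-(N : ℝ)) * (1 + ‖zc (k - l)‖) ^ (-(N : ℝ)) :=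
  oscillatory_integral_decay_general n φ η hφ
end
end
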